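/- arXiv:2403.18284 — 2 statements merged into one kernel-verified Lean document; each statement's English description precedes it below -/
import Mathlib

section
/- Suppose Assumption 1 holds. Then for every U⁰ ∈ F, the level set L := { U ∈ F : g(U) ≥ g(U⁰) } is a bounded subset of ℝ^m × S^n × S^n. -/
open Matrix

noncomputable section

/-- Frobenius norm of a matrix. -/
def frobNorm {k : ℕ} (X : Matrix (Fin k) (Fin k) ℝ) : ℝ :=
  Real.sqrt (∑ i, ∑ j, X i j ^ 2)

/-- The trace inner product `A • B = Σ_{i,j} A_{ij} B_{ij}`. -/
def minner {k : ℕ} (A B : Matrix (Fin k) (Fin k) ℝ) : ℝ := ∑ i, ∑ j, A i j * B i j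

/-- The linear map `Q : S^n → S^{n̄}`, `[Q(X)]_{ab} = X_{K*(a)} − X_{K*(b)}` for `a < b`,
extended symmetrically with zero diagonal, where `K* = e` enumerates the strictly
upper-triangular positions. -/
def Qmap {n : ℕ} (e : Fin (n * (n - 1) / 2) ≃ {p : Fin n × Fin n // p.1 < p.2})
    (X : Matrix (Fin n) (Fin n) ℝ) :
    Matrix (Fin (n * (n - 1) / 2)) (Fin (n * (n - 1) / 2)) ℝ :=
  fun a b =>
    if a < b then X (e a).1.1 (e a).1.2 - X (e b).1.1 (e b).1.2
    else if b < a then X (e b).1.1 (e b).1.2 - X (e a).1.1 (e a).1.2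
    else 0

/-- The adjoint `Qᵀ : S^{n̄} → S^n`:
`[Qᵀ(Z)]_{ij} = Σ_{l > K(i,j)} Z_{K(i,j),l} − Σ_{l < K(i,j)} Z_{l,K(i,j)}` for `i < j`,
extended symmetrically with zero diagonal. -/
def QTmap {n : ℕ} (e : Fin (n * (n - 1) / 2) ≃ {p : Fin n × Fin n // p.1 < p.2})
    (Z : Matrix (Fin (n * (n - 1) / 2)) (Fin (n * (n - 1) / 2)) ℝ) :
    Matrix (Fin n) (Fin n) ℝ :=
  fun i j =>
    if h : i < j then
      (∑ l, if e.symm ⟨(i, j), h⟩ < l then Z (e.symm ⟨(i, j), h⟩) l else 0)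
        - ∑ l, if l < e.symm ⟨(i, j), h⟩ then Z l (e.symm ⟨(i, j), h⟩) else 0
    else if h' : j < i then
      (∑ l, if e.symm ⟨(j, i), h'⟩ < l then Z (e.symm ⟨(j, i), h'⟩) l else 0)
        - ∑ l, if l < e.symm ⟨(j, i), h'⟩ then Z l (e.symm ⟨(j, i), h'⟩) else 0
    else 0

/-- The set `𝒮 = {S ∈ S^n : S = Qᵀ(Z), ‖Z‖_∞ ≤ λ}`. -/
def Sset {n : ℕ} (lam : ℝ) (e : Fin (n * (n - 1) / 2) ≃ {p : Fin n × Fin n // p.1 < p.2}) :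
    Set (Matrix (Fin n) (Fin n) ℝ) :=
  {S | ∃ Z : Matrix (Fin (n * (n - 1) / 2)) (Fin (n * (n - 1) / 2)) ℝ,
    Z.IsSymm ∧ (∀ a b, |Z a b| ≤ lam) ∧ S = QTmap e Z}

/-- Euclidean norm on `ℝ^m`. -/
def eunorm {k : ℕ} (y : Fin k → ℝ) : ℝ := Real.sqrt (∑ i, y i ^ 2)

/-- The set `𝒲 = {W ∈ S^n : ‖W‖_∞ ≤ ρ}`. -/
def Wset {n : ℕ} (ρ : ℝ) : Set (Matrix (Fin n) (Fin n) ℝ) :=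
  {W | W.IsSymm ∧ ∀ i j, |W i j| ≤ ρ}

/-- The linear map `𝒜(X) = (A_1 • X, …, A_m • X)`. -/
def AAmap {n m : ℕ} (A : Fin m → Matrix (Fin n) (Fin n) ℝ)
    (X : Matrix (Fin n) (Fin n) ℝ) : Fin m → ℝ := fun i => minner (A i) X

/-- The adjoint `𝒜ᵀ(y) = Σ_i y_i A_i`. -/
def ATmap {n m : ℕ} (A : Fin m → Matrix (Fin n) (Fin n) ℝ) (y : Fin m → ℝ) :
    Matrix (Fin n) (Fin n) ℝ := ∑ i, y i • A i

/-- `B(U) = −𝒜ᵀ(y) + W/2 + S` for `U = (y, W, S)`. -/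
def Bmap {n m : ℕ} (A : Fin m → Matrix (Fin n) (Fin n) ℝ)
    (U : (Fin m → ℝ) × Matrix (Fin n) (Fin n) ℝ × Matrix (Fin n) (Fin n) ℝ) :
    Matrix (Fin n) (Fin n) ℝ :=
  -(ATmap A U.1) + (1 / 2 : ℝ) • U.2.1 + U.2.2

/-- The dual objective `g(U) = bᵀy + μ log det(C + B(U)) + nμ − nμ log μ`. -/
def gfun {n m : ℕ} (A : Fin m → Matrix (Fin n) (Fin n) ℝ) (b : Fin m → ℝ)
    (C : Matrix (Fin n) (Fin n) ℝ) (μ : ℝ)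
    (U : (Fin m → ℝ) × Matrix (Fin n) (Fin n) ℝ × Matrix (Fin n) (Fin n) ℝ) : ℝ :=
  (∑ i, b i * U.1 i) + μ * Real.log (C + Bmap A U).det
    + (n : ℝ) * μ - (n : ℝ) * μ * Real.log μ

/-- `X(U) = μ (C + B(U))⁻¹`. -/
def XofU {n m : ℕ} (A : Fin m → Matrix (Fin n) (Fin n) ℝ)
    (C : Matrix (Fin n) (Fin n) ℝ) (μ : ℝ)
    (U : (Fin m → ℝ) × Matrix (Fin n) (Fin n) ℝ × Matrix (Fin n) (Fin n) ℝ) :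
    Matrix (Fin n) (Fin n) ℝ := μ • (C + Bmap A U)⁻¹

/-- The set `M = ℝ^m × 𝒲 × 𝒮`. -/
def Mset {n : ℕ} (m : ℕ) (ρ lam : ℝ)
    (e : Fin (n * (n - 1) / 2) ≃ {p : Fin n × Fin n // p.1 < p.2}) :
    Set ((Fin m → ℝ) × Matrix (Fin n) (Fin n) ℝ × Matrix (Fin n) (Fin n) ℝ) :=
  {U | U.2.1 ∈ Wset ρ ∧ U.2.2 ∈ Sset lam e}

/-- The set `N = {U : C + B(U) ≻ 0}`. -/
def Nset {n m : ℕ} (A : Fin m → Matrix (Fin n) (Fin n) ℝ)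
    (C : Matrix (Fin n) (Fin n) ℝ) :
    Set ((Fin m → ℝ) × Matrix (Fin n) (Fin n) ℝ × Matrix (Fin n) (Fin n) ℝ) :=
  {U | (C + Bmap A U).PosDef}

/-- The feasible set `F = M ∩ N`. -/
def Fset {n m : ℕ} (ρ lam : ℝ)
    (e : Fin (n * (n - 1) / 2) ≃ {p : Fin n × Fin n // p.1 < p.2})
    (A : Fin m → Matrix (Fin n) (Fin n) ℝ) (C : Matrix (Fin n) (Fin n) ℝ) :
    Set ((Fin m → ℝ) × Matrix (Fin n) (Fin n) ℝ × Matrix (Fin n) (Fin n) ℝ) :=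
  Mset m ρ lam e ∩ Nset A C

/-- The norm `‖U‖ = √(‖y‖² + ‖W‖_F² + ‖S‖_F²)` on `ℝ^m × S^n × S^n`. -/
def normU {n m : ℕ}
    (U : (Fin m → ℝ) × Matrix (Fin n) (Fin n) ℝ × Matrix (Fin n) (Fin n) ℝ) : ℝ :=
  Real.sqrt (eunorm U.1 ^ 2 + frobNorm U.2.1 ^ 2 + frobNorm U.2.2 ^ 2)

/-!
Fix `X̂ ≻ 0` with `𝒜(X̂) = b` and `δ > 0` with `X̂ ⪰ δ I`, and write `P = C + B(U)`. Since
`𝒜ᵀ(y) = C + W/2 + S − P`, we get `bᵀy = X̂ • 𝒜ᵀ(y) ≤ X̂ • (C + W/2 + S) − δ tr P`, while the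
eigenvalue bound `log t ≤ εt − 1 − log ε` gives `μ log det P ≤ (δ/2) tr P + const`. Hence
`g(U) + (δ/2) tr P` is bounded above on `F` (`W` and `S` range over entrywise bounded sets), so
`tr P`, and with it every entry of `P ⪰ 0`, is bounded on the level set. Then `𝒜ᵀ(y)` is bounded,
and so is `y`, because `𝒜ᵀ` is injective when `𝒜` is surjective.
-/

namespace Matrix

variable {ι : Type*} [Fintype ι]

lemma abs_apply_le_sum_abs (M : Matrix ι ι ℝ) (i j : ι) : |M i j| ≤ ∑ p, ∑ q, |M p q| :=
  (Finset.single_le_sum (f := fun q => |M i q|) (fun _ _ => abs_nonneg _) (Finset.mem_univ j)).trans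
    (Finset.single_le_sum (f := fun p => ∑ q, |M p q|) (fun _ _ => by positivity)
      (Finset.mem_univ i))

variable [DecidableEq ι]

lemma PosDef.exists_pos_smul_one_le {X : Matrix ι ι ℝ} (hX : X.PosDef) :
    ∃ δ : ℝ, 0 < δ ∧ (X - δ • 1).PosSemidef := by
  open MatrixOrder in
  cases isEmpty_or_nonempty ι
  · exact ⟨1, one_pos, by rw [Subsingleton.elim (X - (1 : ℝ) • 1) 0]; exact .zero⟩
  obtain ⟨δ, hδ, hle⟩ := (CFC.exists_pos_algebraMap_le_iff hX.isHermitian.isSelfAdjoint).mpr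
    ((StarOrderedRing.isStrictlyPositive_iff_spectrum_pos X).mp hX.isStrictlyPositive)
  rw [Algebra.algebraMap_eq_smul_one] at hle
  exact ⟨δ, hδ, le_iff.mp hle⟩

lemma PosSemidef.trace_mul_nonneg {Q P : Matrix ι ι ℝ} (hQ : Q.PosSemidef)
    (hP : P.PosSemidef) : 0 ≤ (Q * P).trace := by
  open MatrixOrder in
  obtain ⟨B, rfl⟩ := CStarAlgebra.nonneg_iff_eq_star_mul_self.mp hP.nonneg
  rw [star_eq_conjTranspose, ← Matrix.mul_assoc, trace_mul_cycle]
  exact (hQ.mul_mul_conjTranspose_same B).trace_nonneg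

lemma PosSemidef.abs_apply_le_trace {P : Matrix ι ι ℝ} (hP : P.PosSemidef) (i j : ι) :
    |P i j| ≤ P.trace := by
  have hdiag : ∀ k, P k k ≤ P.trace := fun k =>
    Finset.single_le_sum (fun l _ => hP.diag_nonneg (i := l)) (Finset.mem_univ k)
  have hsymm : P j i = P i j := hP.isHermitian.apply i j
  have hquad : ∀ c : ℝ, 0 ≤ P i i + 2 * c * P i j + c ^ 2 * P j j := fun c => by
    have := hP.dotProduct_mulVec_nonneg (Pi.single i 1 + Pi.single j c)
    simp [mulVec_add, mulVec_single, add_dotProduct, dotProduct_add, hsymm] at this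
    linarith
  rw [abs_le]
  constructor <;> nlinarith [hquad 1, hquad (-1), hdiag i, hdiag j]

lemma PosDef.log_det_le {P : Matrix ι ι ℝ} (hP : P.PosDef) {ε : ℝ} (hε : 0 < ε) :
    Real.log P.det ≤ ε * P.trace - Fintype.card ι * (1 + Real.log ε) := by
  have hev := hP.eigenvalues_pos
  have hsum : ε * ∑ i, hP.isHermitian.eigenvalues i - Fintype.card ι * (1 + Real.log ε)
      = ∑ i, (ε * hP.isHermitian.eigenvalues i - (1 + Real.log ε)) := by
    simp [Finset.mul_sum, Finset.sum_sub_distrib, mul_add]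
  rw [hP.isHermitian.det_eq_prod_eigenvalues, hP.isHermitian.trace_eq_sum_eigenvalues]
  simp only [RCLike.ofReal_real_eq_id, id]
  rw [Real.log_prod fun i _ => (hev i).ne', hsum]
  refine Finset.sum_le_sum fun i _ => ?_
  have := Real.log_le_sub_one_of_pos (mul_pos hε (hev i))
  rw [Real.log_mul hε.ne' (hev i).ne'] at this
  linarith

end Matrix

lemma minner_eq_trace_mul_transpose {k : ℕ} (X M : Matrix (Fin k) (Fin k) ℝ) :
    minner X M = (X * Mᵀ).trace := by
  simp [minner, trace, mul_apply]

lemma minner_sub_right {k : ℕ} (X M N : Matrix (Fin k) (Fin k) ℝ) :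
    minner X (M - N) = minner X M - minner X N := by
  simp [minner, mul_sub, Finset.sum_sub_distrib]

lemma abs_minner_le {k : ℕ} (X : Matrix (Fin k) (Fin k) ℝ) {M : Matrix (Fin k) (Fin k) ℝ}
    {r : ℝ} (hM : ∀ i j, |M i j| ≤ r) : |minner X M| ≤ (∑ i, ∑ j, |X i j|) * r := by
  rw [Finset.sum_mul]
  refine (Finset.abs_sum_le_sum_abs _ _).trans (Finset.sum_le_sum fun i _ => ?_)
  rw [Finset.sum_mul]
  refine (Finset.abs_sum_le_sum_abs _ _).trans (Finset.sum_le_sum fun j _ => ?_)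
  rw [abs_mul]
  exact mul_le_mul_of_nonneg_left (hM i j) (abs_nonneg _)

lemma mul_trace_le_minner {k : ℕ} {X P : Matrix (Fin k) (Fin k) ℝ} {δ : ℝ}
    (hX : (X - δ • 1).PosSemidef) (hP : P.PosSemidef) : δ * P.trace ≤ minner X P := by
  have hPsymm : Pᵀ = P := by rw [← conjTranspose_eq_transpose_of_trivial, hP.isHermitian.eq]
  have := hX.trace_mul_nonneg hP
  rw [sub_mul, trace_sub, smul_mul, one_mul, trace_smul, smul_eq_mul] at this
  rw [minner_eq_trace_mul_transpose, hPsymm]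
  linarith

section AdjointMap

variable {n m : ℕ} (A : Fin m → Matrix (Fin n) (Fin n) ℝ)

lemma ATmap_eq_linearCombination : ATmap A = Fintype.linearCombination ℝ A := by
  ext y
  simp [ATmap, Fintype.linearCombination_apply]

lemma ATmap_eq_sub_Bmap (C : Matrix (Fin n) (Fin n) ℝ)
    (U : (Fin m → ℝ) × Matrix (Fin n) (Fin n) ℝ × Matrix (Fin n) (Fin n) ℝ) :
    ATmap A U.1 = C + (1 / 2 : ℝ) • U.2.1 + U.2.2 - (C + Bmap A U) := by
  simp only [Bmap]
  abel

lemma sum_AAmap_mul_eq_minner_ATmap (X : Matrix (Fin n) (Fin n) ℝ) (y : Fin m → ℝ) :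
    ∑ i, AAmap A X i * y i = minner X (ATmap A y) := by
  simp only [AAmap, minner, ATmap, Matrix.sum_apply, Matrix.smul_apply, smul_eq_mul,
    Finset.sum_mul, Finset.mul_sum]
  rw [Finset.sum_comm]
  refine Finset.sum_congr rfl fun i _ => ?_
  rw [Finset.sum_comm]
  exact Finset.sum_congr rfl fun j _ => Finset.sum_congr rfl fun k _ => by ring

lemma linearIndependent_of_surjective_AAmap (hA : Function.Surjective (AAmap A)) :
    LinearIndependent ℝ A := by
  refine Fintype.linearIndependent_iff.mpr fun y hy => ?_
  obtain ⟨X, hX⟩ := hA y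
  have h := sum_AAmap_mul_eq_minner_ATmap A X y
  rw [hX, ATmap, hy] at h
  simp only [minner, Matrix.zero_apply, mul_zero, Finset.sum_const_zero] at h
  exact fun i => mul_self_eq_zero.mp <|
    (Finset.sum_eq_zero_iff_of_nonneg fun j _ => mul_self_nonneg (y j)).mp h i (Finset.mem_univ i)

attribute [local instance] Matrix.normedAddCommGroup Matrix.normedSpace in
lemma exists_abs_le_mul_of_abs_ATmap_le (hA : LinearIndependent ℝ A) :
    ∃ c : ℝ, ∀ (y : Fin m → ℝ) (K : ℝ), 0 ≤ K →
      (∀ p q, |ATmap A y p q| ≤ K) → ∀ j, |y j| ≤ c * K := by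
  obtain ⟨c, -, hc⟩ := (Fintype.linearCombination ℝ A).exists_antilipschitzWith
    (LinearMap.ker_eq_bot.mpr hA.fintypeLinearCombination_injective)
  refine ⟨c, fun y K hK hy j => ?_⟩
  rw [ATmap_eq_linearCombination] at hy
  calc |y j| ≤ ‖y‖ := norm_le_pi_norm y j
    _ ≤ c * ‖Fintype.linearCombination ℝ A y‖ := ZeroHomClass.bound_of_antilipschitz _ hc y
    _ ≤ c * K := by gcongr; exact (norm_le_iff hK).mpr hy

end AdjointMap

lemma abs_apply_le_of_mem_Sset {n : ℕ}
    {e : Fin (n * (n - 1) / 2) ≃ {p : Fin n × Fin n // p.1 < p.2}} {lam : ℝ} (hlam : 0 ≤ lam)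
    {S : Matrix (Fin n) (Fin n) ℝ} (hS : S ∈ Sset lam e) (i j : Fin n) :
    |S i j| ≤ 2 * (n * (n - 1) / 2 : ℕ) * lam := by
  obtain ⟨Z, -, hZ, rfl⟩ := hS
  have hsum : ∀ (p : Fin (n * (n - 1) / 2) → Prop) [DecidablePred p] (f : _ → ℝ),
      (∀ l, |f l| ≤ lam) → |∑ l, if p l then f l else 0| ≤ (n * (n - 1) / 2 : ℕ) * lam := by
    intro p _ f hf
    refine (Finset.abs_sum_le_sum_abs _ _).trans ?_
    calc ∑ l, |if p l then f l else 0| ≤ ∑ _l : Fin (n * (n - 1) / 2), lam :=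
          Finset.sum_le_sum fun l _ => by split_ifs <;> simp [hf, hlam]
      _ = (n * (n - 1) / 2 : ℕ) * lam := by simp
  have hrow : ∀ a, |(∑ l, if a < l then Z a l else 0) - ∑ l, if l < a then Z l a else 0|
      ≤ 2 * (n * (n - 1) / 2 : ℕ) * lam := fun a => by
    have := (abs_sub _ _).trans
      (add_le_add (hsum (a < ·) (Z a) (hZ a)) (hsum (· < a) (Z · a) (hZ · a)))
    linarith
  unfold QTmap
  split_ifs
  · exact hrow _
  · exact hrow _
  · simpa using by positivity

section LevelSet

variable {n m : ℕ} {A : Fin m → Matrix (Fin n) (Fin n) ℝ} {b : Fin m → ℝ}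
  {C X : Matrix (Fin n) (Fin n) ℝ} {μ δ : ℝ}
  {U : (Fin m → ℝ) × Matrix (Fin n) (Fin n) ℝ × Matrix (Fin n) (Fin n) ℝ}

lemma gfun_add_half_mul_trace_le (hμ : 0 < μ) (hδ : 0 < δ) (hX : (X - δ • 1).PosSemidef)
    (hXb : AAmap A X = b) (hU : (C + Bmap A U).PosDef) :
    gfun A b C μ U + δ / 2 * (C + Bmap A U).trace
      ≤ minner X (C + (1 / 2 : ℝ) • U.2.1 + U.2.2) - n * μ * Real.log (δ / 2) := by
  have hlin : ∑ i, b i * U.1 i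
      = minner X (C + (1 / 2 : ℝ) • U.2.1 + U.2.2) - minner X (C + Bmap A U) := by
    rw [← hXb, sum_AAmap_mul_eq_minner_ATmap, ATmap_eq_sub_Bmap A C, minner_sub_right]
  have hP := mul_trace_le_minner hX hU.posSemidef
  have hdet := hU.log_det_le (ε := δ / (2 * μ)) (by positivity)
  have hlog : Real.log (δ / (2 * μ)) = Real.log (δ / 2) - Real.log μ := by
    rw [← Real.log_div (by positivity) hμ.ne', div_div, mul_comm]
  rw [Fintype.card_fin, hlog] at hdet
  have hμdet := mul_le_mul_of_nonneg_left hdet hμ.le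
  have hμε : μ * (δ / (2 * μ)) = δ / 2 := by field_simp
  rw [mul_sub, ← mul_assoc, hμε] at hμdet
  unfold gfun
  linarith

lemma trace_le_of_le_gfun (hμ : 0 < μ) (hδ : 0 < δ) (hX : (X - δ • 1).PosSemidef)
    (hXb : AAmap A X = b) (hU : (C + Bmap A U).PosDef) {K g₀ : ℝ}
    (hK : ∀ i j, |(C + (1 / 2 : ℝ) • U.2.1 + U.2.2) i j| ≤ K) (hg : g₀ ≤ gfun A b C μ U) :
    (C + Bmap A U).trace
      ≤ ((∑ i, ∑ j, |X i j|) * K - n * μ * Real.log (δ / 2) - g₀) / (δ / 2) := by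
  have := gfun_add_half_mul_trace_le hμ hδ hX hXb hU
  have := (abs_le.mp (abs_minner_le X hK)).2
  rw [le_div_iff₀ (by positivity)]
  linarith

end LevelSet

lemma sum_sq_le_of_abs_le {ι : Type*} [Fintype ι] {f : ι → ℝ} {r : ℝ} (hf : ∀ i, |f i| ≤ r) :
    ∑ i, f i ^ 2 ≤ Fintype.card ι * r ^ 2 := by
  calc ∑ i, f i ^ 2 ≤ ∑ _i : ι, r ^ 2 :=
        Finset.sum_le_sum fun i _ => sq_le_sq' (abs_le.mp (hf i)).1 (abs_le.mp (hf i)).2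
    _ = Fintype.card ι * r ^ 2 := by simp

lemma frobNorm_sq_le_of_abs_le {n : ℕ} {M : Matrix (Fin n) (Fin n) ℝ} {r : ℝ}
    (hM : ∀ i j, |M i j| ≤ r) : frobNorm M ^ 2 ≤ n ^ 2 * r ^ 2 := by
  rw [frobNorm, Real.sq_sqrt (by positivity)]
  calc ∑ i, ∑ j, M i j ^ 2 ≤ ∑ _i : Fin n, n * r ^ 2 :=
        Finset.sum_le_sum fun i _ => by simpa using sum_sq_le_of_abs_le (hM i)
    _ = n ^ 2 * r ^ 2 := by simp; ring

lemma normU_le_of_abs_le {n m : ℕ}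
    {U : (Fin m → ℝ) × Matrix (Fin n) (Fin n) ℝ × Matrix (Fin n) (Fin n) ℝ} {a r s : ℝ}
    (hy : ∀ j, |U.1 j| ≤ a) (hW : ∀ i j, |U.2.1 i j| ≤ r) (hS : ∀ i j, |U.2.2 i j| ≤ s) :
    normU U ≤ Real.sqrt (m * a ^ 2 + n ^ 2 * r ^ 2 + n ^ 2 * s ^ 2) := by
  have hy_sq : eunorm U.1 ^ 2 ≤ m * a ^ 2 := by
    rw [eunorm, Real.sq_sqrt (by positivity)]
    simpa using sum_sq_le_of_abs_le hy
  unfold normU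
  gcongr
  · exact frobNorm_sq_le_of_abs_le hW
  · exact frobNorm_sq_le_of_abs_le hS

theorem stmt_2_general {n m : ℕ}
    (e : Fin (n * (n - 1) / 2) ≃ {p : Fin n × Fin n // p.1 < p.2})
    (μ ρ lam : ℝ) (hμ : 0 < μ) (hρ : 0 < ρ) (hlam : 0 < lam)
    (C : Matrix (Fin n) (Fin n) ℝ)
    (b : Fin m → ℝ) (A : Fin m → Matrix (Fin n) (Fin n) ℝ)
    (hsurj : ∀ v : Fin m → ℝ, ∃ X : Matrix (Fin n) (Fin n) ℝ, X.IsSymm ∧ AAmap A X = v)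
    (hfeas : ∃ Xhat : Matrix (Fin n) (Fin n) ℝ, Xhat.PosDef ∧ AAmap A Xhat = b)
    (U0 : (Fin m → ℝ) × Matrix (Fin n) (Fin n) ℝ × Matrix (Fin n) (Fin n) ℝ) :
    ∃ R : ℝ, ∀ U ∈ {U ∈ Fset ρ lam e A C | gfun A b C μ U0 ≤ gfun A b C μ U},
      normU U ≤ R := by
  obtain ⟨X, hXpos, hXb⟩ := hfeas
  obtain ⟨δ, hδ, hXδ⟩ := hXpos.exists_pos_smul_one_le
  obtain ⟨c, hc⟩ := exists_abs_le_mul_of_abs_ATmap_le A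
    (linearIndependent_of_surjective_AAmap A fun v => (hsurj v).imp fun _ => And.right)
  set s : ℝ := 2 * (n * (n - 1) / 2 : ℕ) * lam
  set K := (∑ i, ∑ j, |C i j|) + ρ / 2 + s with hK_def
  set T := ((∑ i, ∑ j, |X i j|) * K - n * μ * Real.log (δ / 2) - gfun A b C μ U0) / (δ / 2)
  refine ⟨Real.sqrt (m * (c * (K + T)) ^ 2 + n ^ 2 * ρ ^ 2 + n ^ 2 * s ^ 2), ?_⟩
  rintro U ⟨⟨⟨hW, hSmem⟩, hP⟩, hg⟩
  have hS : ∀ i j, |U.2.2 i j| ≤ s := abs_apply_le_of_mem_Sset hlam.le hSmem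
  have hK : ∀ i j, |(C + (1 / 2 : ℝ) • U.2.1 + U.2.2) i j| ≤ K := fun i j => by
    simp only [Matrix.add_apply, Matrix.smul_apply, smul_eq_mul]
    refine (abs_add_three _ _ _).trans ?_
    rw [abs_mul, abs_of_pos (one_half_pos (α := ℝ))]
    linarith [C.abs_apply_le_sum_abs i j, hW.2 i j, hS i j]
  have htr := trace_le_of_le_gfun hμ hδ hXδ hXb hP hK hg
  have hAT : ∀ p q, |ATmap A U.1 p q| ≤ K + T := fun p q => by
    rw [ATmap_eq_sub_Bmap A C, Matrix.sub_apply]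
    exact (abs_sub _ _).trans
      (add_le_add (hK p q) ((hP.posSemidef.abs_apply_le_trace p q).trans htr))
  have hKT : 0 ≤ K + T := add_nonneg (by positivity) (hP.posSemidef.trace_nonneg.trans htr)
  exact normU_le_of_abs_le (hc U.1 _ hKT hAT) hW.2 hS

/-- Assumption 1: for every `U⁰ ∈ F`, the level set
`L = {U ∈ F : g(U) ≥ g(U⁰)}` is bounded. -/
theorem stmt_2 {n m : ℕ} (hn : 2 ≤ n)
    (e : Fin (n * (n - 1) / 2) ≃ {p : Fin n × Fin n // p.1 < p.2})
    (μ ρ lam : ℝ) (hμ : 0 < μ) (hρ : 0 < ρ) (hlam : 0 < lam)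
    (C : Matrix (Fin n) (Fin n) ℝ) (hC : C.IsSymm)
    (b : Fin m → ℝ) (A : Fin m → Matrix (Fin n) (Fin n) ℝ) (hA : ∀ i, (A i).IsSymm)
    (hsurj : ∀ v : Fin m → ℝ, ∃ X : Matrix (Fin n) (Fin n) ℝ, X.IsSymm ∧ AAmap A X = v)
    (hfeas : ∃ Xhat : Matrix (Fin n) (Fin n) ℝ, Xhat.PosDef ∧ AAmap A Xhat = b)
    (hFne : (Fset ρ lam e A C).Nonempty)
    (U0 : (Fin m → ℝ) × Matrix (Fin n) (Fin n) ℝ × Matrix (Fin n) (Fin n) ℝ)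
    (hU0 : U0 ∈ Fset ρ lam e A C) :
    ∃ R : ℝ, ∀ U ∈ {U ∈ Fset ρ lam e A C | gfun A b C μ U0 ≤ gfun A b C μ U},
      normU U ≤ R :=
  stmt_2_general e μ ρ lam hμ hρ hlam C b A hsurj hfeas U0
end
end

section
/- Let n ≥ 2, λ > 0, X ∈ S^n and S ∈ 𝒮. Let Ŝ := P_𝒮(S + X) be the metric projection of S + X onto 𝒮, let ΔS := Ŝ − S, and let E ∈ S^n̄ be the sign matrix of Q(X), i.e., E_{ab} = sign([Q(X)]_{ab}). Then 0 ≤ X • (λ·Qᵀ(E) − Ŝ) ≤ ΔS • (λ·Qᵀ(E) − Ŝ). -/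
open Matrix

noncomputable section

section Helpers

variable {k : ℕ}

lemma minner_self_nonneg (A : Matrix (Fin k) (Fin k) ℝ) : 0 ≤ minner A A :=
  Finset.sum_nonneg fun _ _ => Finset.sum_nonneg fun _ _ => mul_self_nonneg _

lemma minner_sub_left (A B C : Matrix (Fin k) (Fin k) ℝ) :
    minner (A - B) C = minner A C - minner B C := by
  simp [minner, Matrix.sub_apply, sub_mul, Finset.sum_sub_distrib]

lemma minner_expand (A D : Matrix (Fin k) (Fin k) ℝ) (t : ℝ) :
    minner (A - t • D) (A - t • D)
      = minner A A - 2 * t * minner A D + t ^ 2 * minner D D := by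
  have h1 : minner (A - t • D) (A - t • D)
      = ∑ i, ∑ j, (A i j * A i j - 2 * t * (A i j * D i j)
          + t ^ 2 * (D i j * D i j)) := by
    refine Finset.sum_congr rfl fun i _ => Finset.sum_congr rfl fun j _ => ?_
    simp only [Matrix.sub_apply, Matrix.smul_apply, smul_eq_mul]
    ring
  rw [h1]
  simp only [minner, Finset.sum_add_distrib, Finset.sum_sub_distrib, ← Finset.mul_sum]

lemma frobNorm_eq (A : Matrix (Fin k) (Fin k) ℝ) :
    frobNorm A = Real.sqrt (minner A A) := by
  simp [frobNorm, minner, sq]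

lemma minner_le_of_frob {A B : Matrix (Fin k) (Fin k) ℝ}
    (h : frobNorm A ≤ frobNorm B) : minner A A ≤ minner B B := by
  by_contra hlt
  push_neg at hlt
  have := Real.sqrt_lt_sqrt (minner_self_nonneg B) hlt
  rw [← frobNorm_eq, ← frobNorm_eq] at this
  exact absurd h (not_le.2 this)

lemma sum_pair_symm {ι : Type*} [Fintype ι] [LinearOrder ι] (g : ι → ι → ℝ)
    (hsymm : ∀ i j, g j i = g i j) (hdiag : ∀ i, g i i = 0) :
    ∑ i, ∑ j, g i j = 2 * ∑ i, ∑ j, (if i < j then g i j else 0) := by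
  have key : ∀ i j, g i j
      = (if i < j then g i j else 0) + (if j < i then g j i else 0) := by
    intro i j
    rcases lt_trichotomy i j with h | h | h
    · simp [h, not_lt.2 h.le]
    · simp [h, hdiag]
    · simp [h, not_lt.2 h.le, hsymm i j]
  calc ∑ i, ∑ j, g i j
      = ∑ i, ∑ j, ((if i < j then g i j else 0) + (if j < i then g j i else 0)) :=
        Finset.sum_congr rfl fun i _ => Finset.sum_congr rfl fun j _ => key i j
    _ = (∑ i, ∑ j, (if i < j then g i j else 0))
        + ∑ i, ∑ j, (if j < i then g j i else 0) := by
        simp [Finset.sum_add_distrib]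
    _ = 2 * ∑ i, ∑ j, (if i < j then g i j else 0) := by
        have hc : (∑ i, ∑ j, (if j < i then g j i else 0))
            = ∑ j, ∑ i, (if j < i then g j i else 0) := Finset.sum_comm
        rw [hc]; ring

lemma sum_dite_lt {N m : ℕ}
    (e : Fin N ≃ {p : Fin m × Fin m // p.1 < p.2})
    (F : ∀ i j : Fin m, i < j → ℝ) :
    ∑ i, ∑ j, (if h : i < j then F i j h else 0)
      = ∑ k, F (e k).1.1 (e k).1.2 (e k).2 := by
  have h1 : ∑ k, F (e k).1.1 (e k).1.2 (e k).2
      = ∑ p : {p : Fin m × Fin m // p.1 < p.2}, F p.1.1 p.1.2 p.2 :=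
    e.sum_comp (fun p : {p : Fin m × Fin m // p.1 < p.2} => F p.1.1 p.1.2 p.2)
  rw [h1]
  have h2 : ∑ p : {p : Fin m × Fin m // p.1 < p.2}, F p.1.1 p.1.2 p.2
      = ∑ p : {p : Fin m × Fin m // p.1 < p.2},
          (fun q : Fin m × Fin m => if h : q.1 < q.2 then F q.1 q.2 h else 0) p :=
    Finset.sum_congr rfl fun p _ => by simp [p.2]
  have h3 := Finset.sum_subtype
    (p := fun q : Fin m × Fin m => q.1 < q.2)
    (F := inferInstance)
    (Finset.univ.filter fun q : Fin m × Fin m => q.1 < q.2)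
    (fun q => by simp)
    (fun q : Fin m × Fin m => if h : q.1 < q.2 then F q.1 q.2 h else 0)
  rw [h2, ← h3]
  rw [Finset.sum_filter]
  rw [Fintype.sum_prod_type]
  refine Finset.sum_congr rfl fun i _ => Finset.sum_congr rfl fun j _ => ?_
  by_cases h : i < j
  · simp [h]
  · simp [h]

lemma QTmap_apply_symm {n : ℕ}
    (e : Fin (n * (n - 1) / 2) ≃ {p : Fin n × Fin n // p.1 < p.2})
    (Z : Matrix (Fin (n * (n - 1) / 2)) (Fin (n * (n - 1) / 2)) ℝ) (i j : Fin n) :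
    QTmap e Z j i = QTmap e Z i j := by
  unfold QTmap
  rcases lt_trichotomy i j with h | h | h
  · rw [dif_neg (asymm h), dif_pos h, dif_pos h]
  · subst h; rfl
  · rw [dif_pos h, dif_neg (asymm h), dif_pos h]

lemma QTmap_diag {n : ℕ}
    (e : Fin (n * (n - 1) / 2) ≃ {p : Fin n × Fin n // p.1 < p.2})
    (Z : Matrix (Fin (n * (n - 1) / 2)) (Fin (n * (n - 1) / 2)) ℝ) (i : Fin n) :
    QTmap e Z i i = 0 := by
  unfold QTmap
  rw [dif_neg (lt_irrefl i), dif_neg (lt_irrefl i)]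

lemma Qmap_apply_symm {n : ℕ}
    (e : Fin (n * (n - 1) / 2) ≃ {p : Fin n × Fin n // p.1 < p.2})
    (X : Matrix (Fin n) (Fin n) ℝ) (a b : Fin (n * (n - 1) / 2)) :
    Qmap e X b a = Qmap e X a b := by
  unfold Qmap
  rcases lt_trichotomy a b with h | h | h
  · rw [if_neg (asymm h), if_pos h, if_pos h]
  · subst h; rfl
  · rw [if_pos h, if_neg (asymm h), if_pos h]

lemma Qmap_diag {n : ℕ}
    (e : Fin (n * (n - 1) / 2) ≃ {p : Fin n × Fin n // p.1 < p.2})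
    (X : Matrix (Fin n) (Fin n) ℝ) (a : Fin (n * (n - 1) / 2)) :
    Qmap e X a a = 0 := by
  unfold Qmap
  rw [if_neg (lt_irrefl a), if_neg (lt_irrefl a)]

lemma ite_sub_zero {c : Prop} [Decidable c] (x y : ℝ) :
    (if c then x - y else 0) = (if c then x else 0) - (if c then y else 0) := by
  split <;> simp

lemma ite_mul_zero {c : Prop} [Decidable c] (x y : ℝ) :
    (if c then x * y else 0) = x * (if c then y else 0) := by
  split <;> simp

lemma QTmap_sub {n : ℕ}
    (e : Fin (n * (n - 1) / 2) ≃ {p : Fin n × Fin n // p.1 < p.2})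
    (Y Z : Matrix (Fin (n * (n - 1) / 2)) (Fin (n * (n - 1) / 2)) ℝ) :
    QTmap e (Y - Z) = QTmap e Y - QTmap e Z := by
  funext i j
  simp only [Matrix.sub_apply]
  unfold QTmap
  split_ifs with h h'
  · simp only [Matrix.sub_apply, ite_sub_zero, Finset.sum_sub_distrib]; ring
  · simp only [Matrix.sub_apply, ite_sub_zero, Finset.sum_sub_distrib]; ring
  · simp

lemma QTmap_add {n : ℕ}
    (e : Fin (n * (n - 1) / 2) ≃ {p : Fin n × Fin n // p.1 < p.2})
    (Y Z : Matrix (Fin (n * (n - 1) / 2)) (Fin (n * (n - 1) / 2)) ℝ) :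
    QTmap e (Y + Z) = QTmap e Y + QTmap e Z := by
  have h := QTmap_sub e (Y + Z) Z
  simp only [add_sub_cancel_right] at h
  funext i j
  have := congrFun (congrFun h i) j
  simp only [Matrix.sub_apply, Matrix.add_apply] at this ⊢
  linarith

lemma QTmap_smul {n : ℕ}
    (e : Fin (n * (n - 1) / 2) ≃ {p : Fin n × Fin n // p.1 < p.2})
    (c : ℝ) (Z : Matrix (Fin (n * (n - 1) / 2)) (Fin (n * (n - 1) / 2)) ℝ) :
    QTmap e (c • Z) = c • QTmap e Z := by
  funext i j
  simp only [Matrix.smul_apply, smul_eq_mul]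
  unfold QTmap
  split_ifs with h h'
  · simp only [Matrix.smul_apply, smul_eq_mul, ite_mul_zero, ← Finset.mul_sum]; ring
  · simp only [Matrix.smul_apply, smul_eq_mul, ite_mul_zero, ← Finset.mul_sum]; ring
  · simp

/-- The adjoint identity: for symmetric `X` and `Z`,
`⟨X, Qᵀ Z⟩ = ⟨Q X, Z⟩`. -/
def hfunZ {N : ℕ} (Z : Matrix (Fin N) (Fin N) ℝ) (kk : Fin N) : ℝ :=
  (∑ l, if kk < l then Z kk l else 0) - ∑ l, if l < kk then Z l kk else 0

lemma minner_QT {n : ℕ}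
    (e : Fin (n * (n - 1) / 2) ≃ {p : Fin n × Fin n // p.1 < p.2})
    (X : Matrix (Fin n) (Fin n) ℝ)
    (Z : Matrix (Fin (n * (n - 1) / 2)) (Fin (n * (n - 1) / 2)) ℝ)
    (hX : ∀ i j, X j i = X i j) (hZ : ∀ a b, Z b a = Z a b) :
    minner X (QTmap e Z) = minner (Qmap e X) Z := by
  -- left side
  have hL : minner X (QTmap e Z)
      = 2 * ∑ i, ∑ j, (if i < j then X i j * QTmap e Z i j else 0) := by
    refine sum_pair_symm _ (fun i j => ?_) (fun i => ?_)
    · rw [hX i j, QTmap_apply_symm]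
    · rw [QTmap_diag, mul_zero]
  have hL2 : (∑ i, ∑ j, (if i < j then X i j * QTmap e Z i j else 0))
      = ∑ i, ∑ j, (if h : i < j then X i j * hfunZ Z (e.symm ⟨(i, j), h⟩) else 0) := by
    refine Finset.sum_congr rfl fun i _ => Finset.sum_congr rfl fun j _ => ?_
    by_cases h : i < j
    · rw [if_pos h, dif_pos h]
      unfold QTmap hfunZ
      rw [dif_pos h]
    · rw [if_neg h, dif_neg h]
  have hL3 : (∑ i, ∑ j, (if h : i < j then X i j * hfunZ Z (e.symm ⟨(i, j), h⟩) else 0))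
      = ∑ kk, X (e kk).1.1 (e kk).1.2 * hfunZ Z kk := by
    rw [sum_dite_lt e (fun i j h => X i j * hfunZ Z (e.symm ⟨(i, j), h⟩))]
    refine Finset.sum_congr rfl fun kk _ => ?_
    have heq : (⟨((e kk).1.1, (e kk).1.2), (e kk).2⟩ :
        {p : Fin n × Fin n // p.1 < p.2}) = e kk := rfl
    rw [heq, e.symm_apply_apply]
  -- expand the hfun sum
  have hL4 : (∑ kk, X (e kk).1.1 (e kk).1.2 * hfunZ Z kk)
      = ∑ a, ∑ b, (if a < b then
          (X (e a).1.1 (e a).1.2 - X (e b).1.1 (e b).1.2) * Z a b else 0) := by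
    have step1 : (∑ kk, X (e kk).1.1 (e kk).1.2 * hfunZ Z kk)
        = (∑ a, ∑ b, (if a < b then X (e a).1.1 (e a).1.2 * Z a b else 0))
          - ∑ a, ∑ b, (if b < a then X (e a).1.1 (e a).1.2 * Z b a else 0) := by
      rw [← Finset.sum_sub_distrib]
      refine Finset.sum_congr rfl fun a _ => ?_
      unfold hfunZ
      simp only [mul_sub, Finset.mul_sum, ← ite_mul_zero]
    rw [step1]
    have step2 : (∑ a, ∑ b, (if b < a then X (e a).1.1 (e a).1.2 * Z b a else 0))
        = ∑ a, ∑ b, (if a < b then X (e b).1.1 (e b).1.2 * Z a b else 0) :=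
      Finset.sum_comm
    rw [step2, ← Finset.sum_sub_distrib]
    refine Finset.sum_congr rfl fun a _ => ?_
    rw [← Finset.sum_sub_distrib]
    refine Finset.sum_congr rfl fun b _ => ?_
    by_cases h : a < b
    · simp only [if_pos h]; ring
    · simp [h]
  -- right side
  have hR : minner (Qmap e X) Z
      = 2 * ∑ a, ∑ b, (if a < b then Qmap e X a b * Z a b else 0) := by
    refine sum_pair_symm _ (fun a b => ?_) (fun a => ?_)
    · rw [Qmap_apply_symm, hZ a b]
    · rw [Qmap_diag, zero_mul]
  rw [hL, hL2, hL3, hL4, hR]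
  congr 1
  refine Finset.sum_congr rfl fun a _ => Finset.sum_congr rfl fun b _ => ?_
  by_cases h : a < b
  · simp only [if_pos h]
    unfold Qmap
    rw [if_pos h]
  · simp [h]

lemma abs_sign_le_one (x : ℝ) : |Real.sign x| ≤ 1 := by
  rcases lt_trichotomy x 0 with h | h | h
  · rw [Real.sign_of_neg h]; norm_num
  · rw [h, Real.sign_zero]; norm_num
  · rw [Real.sign_of_pos h]; norm_num

lemma mul_sign_eq_abs (x : ℝ) : x * Real.sign x = |x| := by
  rcases lt_trichotomy x 0 with h | h | h
  · rw [Real.sign_of_neg h, abs_of_neg h]; ring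
  · rw [h, Real.sign_zero, abs_zero]; ring
  · rw [Real.sign_of_pos h, abs_of_pos h]; ring

/-- Convexity of `Sset`, phrased for segments. -/
lemma Sset_segment {n : ℕ} (lam : ℝ)
    (e : Fin (n * (n - 1) / 2) ≃ {p : Fin n × Fin n // p.1 < p.2})
    {S1 S2 : Matrix (Fin n) (Fin n) ℝ}
    (h1 : S1 ∈ Sset lam e) (h2 : S2 ∈ Sset lam e)
    {t : ℝ} (ht0 : 0 ≤ t) (ht1 : t ≤ 1) :
    S1 + t • (S2 - S1) ∈ Sset lam e := by
  obtain ⟨Z1, hZ1s, hZ1b, rfl⟩ := h1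
  obtain ⟨Z2, hZ2s, hZ2b, rfl⟩ := h2
  refine ⟨Z1 + t • (Z2 - Z1), ?_, ?_, ?_⟩
  · unfold Matrix.IsSymm at *
    rw [Matrix.transpose_add, Matrix.transpose_smul, Matrix.transpose_sub, hZ1s, hZ2s]
  · intro a b
    have b1 := hZ1b a b
    have b2 := hZ2b a b
    simp only [Matrix.add_apply, Matrix.smul_apply, Matrix.sub_apply, smul_eq_mul]
    rw [abs_le] at *
    constructor <;> nlinarith [b1.1, b1.2, b2.1, b2.2]
  · rw [QTmap_add, QTmap_smul, QTmap_sub]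

end Helpers

/-- for `X ∈ S^n`, `S ∈ 𝒮`, `Ŝ = P_𝒮(S + X)`, `ΔS = Ŝ − S`, and `E` the
sign matrix of `Q(X)`, one has `0 ≤ X • (λ Qᵀ(E) − Ŝ) ≤ ΔS • (λ Qᵀ(E) − Ŝ)`. -/
theorem stmt_18 {n : ℕ} (hn : 2 ≤ n) (lam : ℝ) (hlam : 0 < lam)
    (e : Fin (n * (n - 1) / 2) ≃ {p : Fin n × Fin n // p.1 < p.2})
    (X S : Matrix (Fin n) (Fin n) ℝ) (hX : X.IsSymm) (hS : S ∈ Sset lam e)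
    (P : Matrix (Fin n) (Fin n) ℝ → Matrix (Fin n) (Fin n) ℝ)
    (hP : ∀ M : Matrix (Fin n) (Fin n) ℝ, P M ∈ Sset lam e ∧
      ∀ T ∈ Sset lam e, frobNorm (M - P M) ≤ frobNorm (M - T))
    (Shat : Matrix (Fin n) (Fin n) ℝ) (hShat : Shat = P (S + X))
    (ΔS : Matrix (Fin n) (Fin n) ℝ) (hΔS : ΔS = Shat - S)
    (E : Matrix (Fin (n * (n - 1) / 2)) (Fin (n * (n - 1) / 2)) ℝ)
    (hE : ∀ a b, E a b = Real.sign (Qmap e X a b)) :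
    0 ≤ minner X (lam • QTmap e E - Shat) ∧
      minner X (lam • QTmap e E - Shat) ≤ minner ΔS (lam • QTmap e E - Shat) := by
  -- unpack the projection
  have hShatMem : Shat ∈ Sset lam e := hShat ▸ (hP (S + X)).1
  obtain ⟨Zh, hZhs, hZhb, hShatZ⟩ := hShatMem
  have hXs : ∀ i j, X j i = X i j := fun i j => by
    conv_rhs => rw [← hX]
    rfl
  have hZhsymm : ∀ a b, Zh b a = Zh a b := fun a b => by
    conv_rhs => rw [← hZhs]
    rfl
  have hEsymm : ∀ a b, E b a = E a b := fun a b => by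
    rw [hE, hE, Qmap_apply_symm]
  -- `lam • QTmap e E` belongs to `Sset`
  have hTp : lam • QTmap e E ∈ Sset lam e := by
    refine ⟨lam • E, ?_, ?_, (QTmap_smul e lam E).symm⟩
    · unfold Matrix.IsSymm
      ext a b
      simp only [Matrix.transpose_apply, Matrix.smul_apply, smul_eq_mul]
      rw [hEsymm]
    · intro a b
      simp only [Matrix.smul_apply, smul_eq_mul, abs_mul, abs_of_pos hlam]
      calc lam * |E a b| ≤ lam * 1 := by
            refine mul_le_mul_of_nonneg_left ?_ hlam.le
            rw [hE]; exact abs_sign_le_one _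
        _ = lam := mul_one lam
  -- the difference is `QTmap` of a symmetric matrix
  have hWsymm : ∀ a b, (lam • E - Zh) b a = (lam • E - Zh) a b := fun a b => by
    simp only [Matrix.sub_apply, Matrix.smul_apply, smul_eq_mul, hEsymm, hZhsymm]
  have hdiff : lam • QTmap e E - Shat = QTmap e (lam • E - Zh) := by
    rw [hShatZ, QTmap_sub, QTmap_smul]
  -- First inequality
  have hfirst : 0 ≤ minner X (lam • QTmap e E - Shat) := by
    rw [hdiff, minner_QT e X _ hXs hWsymm]
    unfold minner
    refine Finset.sum_nonneg fun a _ => Finset.sum_nonneg fun b _ => ?_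
    set q := Qmap e X a b with hq
    have hEab : E a b = Real.sign q := hE a b
    have hb : |Zh a b| ≤ lam := hZhb a b
    have h1 : q * Zh a b ≤ |q| * lam := by
      calc q * Zh a b ≤ |q * Zh a b| := le_abs_self _
        _ = |q| * |Zh a b| := abs_mul _ _
        _ ≤ |q| * lam := mul_le_mul_of_nonneg_left hb (abs_nonneg q)
    have h2 : q * (lam * E a b) = lam * |q| := by
      rw [hEab, ← mul_sign_eq_abs]; ring
    simp only [Matrix.sub_apply, Matrix.smul_apply, smul_eq_mul]
    calc (0 : ℝ) = lam * |q| - |q| * lam := by ring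
      _ ≤ q * (lam * E a b) - q * Zh a b := by rw [h2]; linarith
      _ = q * (lam * E a b - Zh a b) := by ring
  refine ⟨hfirst, ?_⟩
  -- Second inequality: projection variational inequality
  set M := S + X with hM
  set A := M - Shat with hA
  set D := lam • QTmap e E - Shat with hD
  have hqD : 0 ≤ minner D D := minner_self_nonneg D
  have hkey : ∀ t : ℝ, 0 < t → t ≤ 1 →
      2 * t * minner A D ≤ t ^ 2 * minner D D := by
    intro t ht0 ht1
    have hTt : Shat + t • D ∈ Sset lam e := by
      have := Sset_segment lam e (hShat ▸ (hP (S + X)).1) hTp ht0.le ht1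
      rwa [hD]
    have hfr : frobNorm (M - P M) ≤ frobNorm (M - (Shat + t • D)) :=
      (hP M).2 _ hTt
    rw [← hShat] at hfr
    have hsub : M - (Shat + t • D) = A - t • D := by
      rw [hA]; abel
    rw [hsub] at hfr
    have hmin : minner A A ≤ minner (A - t • D) (A - t • D) := minner_le_of_frob hfr
    rw [minner_expand] at hmin
    linarith
  have hc : minner A D ≤ 0 := by
    by_contra hpos
    push_neg at hpos
    set c := minner A D with hcdef
    set qd := minner D D with hqd
    set t0 : ℝ := min 1 (c / (qd + 1)) with ht0def
    have hqd1 : 0 < qd + 1 := by linarith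
    have ht0pos : 0 < t0 := lt_min one_pos (div_pos hpos hqd1)
    have ht0le : t0 ≤ 1 := min_le_left _ _
    have ht0le2 : t0 ≤ c / (qd + 1) := min_le_right _ _
    have h1 : 2 * t0 * c ≤ t0 ^ 2 * qd := hkey t0 ht0pos ht0le
    have h2 : t0 * (qd + 1) ≤ c := by
      rw [← div_mul_cancel₀ c (ne_of_gt hqd1)]
      exact mul_le_mul_of_nonneg_right ht0le2 hqd1.le
    nlinarith [sq_nonneg t0, mul_pos ht0pos hpos]
  have hAeq : A = X - ΔS := by
    rw [hA, hM, hΔS]; abel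
  rw [hAeq, minner_sub_left] at hc
  linarith
end
end
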